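/- The maps π ↦ ν_π (from policies to their normalized discounted occupation measures) and ν ↦ π_ν(a|x) = ν(x,a)/ν^X(x) define a bijective correspondence between feasible policies of the maximum causal entropy problem and feasible occupation measures of its convex reformulation, provided μ_E(x) > 0 for all x ∈ X. -/

import Mathlib

open scoped BigOperators

/-- The law of the state `x(t)` of the Markov chain with transition kernel
`p` (where `p y a x` is the probability of moving to `x` from `y` under action `a`),
stationary policy `π` and initial distribution `μ0`. -/
noncomputable def stateLaw {X A : Type*} [Fintype X] [Fintype A]
    (p : X → A → X → ℝ) (π : X → A → ℝ) (μ0 : X → ℝ) : ℕ → X → ℝ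
  | 0 => μ0
  | (t + 1) => fun x => ∑ y, ∑ a, p y a x * π y a * stateLaw p π μ0 t y

/-- The law of the state-action pair `(x(t), a(t))`. -/
noncomputable def jointLaw {X A : Type*} [Fintype X] [Fintype A]
    (p : X → A → X → ℝ) (π : X → A → ℝ) (μ0 : X → ℝ) (t : ℕ) (x : X) (a : A) : ℝ :=
  π x a * stateLaw p π μ0 t x

/-- The normalized discounted state-action occupation measure
`ν_π(x,a) = (1−β) ∑_{t≥0} β^t P[(x(t),a(t)) = (x,a)]`. -/
noncomputable def occ {X A : Type*} [Fintype X] [Fintype A]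
    (β : ℝ) (p : X → A → X → ℝ) (π : X → A → ℝ) (μ0 : X → ℝ) (x : X) (a : A) : ℝ :=
  (1 - β) * ∑' t : ℕ, β ^ t * jointLaw p π μ0 t x a

/-- Feasible policies of the maximum causal entropy problem `(OPT₁)`:
`π` is a policy making `μ_E` invariant and matching the discounted feature expectation. -/
def FeasiblePolicy {X A : Type*} [Fintype X] [Fintype A] {d : ℕ}
    (β : ℝ) (p : X → A → X → ℝ) (μE : X → ℝ)
    (f : X → A → EuclideanSpace ℝ (Fin d)) (Fv : EuclideanSpace ℝ (Fin d))
    (π : X → A → ℝ) : Prop :=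
  (∀ x a, 0 ≤ π x a) ∧ (∀ x, ∑ a, π x a = 1) ∧
  (∀ x, μE x = ∑ y, ∑ a, p y a x * π y a * μE y) ∧
  (∑' t : ℕ, β ^ t • ∑ x, ∑ a, jointLaw p π μE t x a • f x a) = Fv

/-- Feasible occupation measures of the convex reformulation `(OPT₂)`. -/
def FeasibleOcc {X A : Type*} [Fintype X] [Fintype A] {d : ℕ}
    (β : ℝ) (p : X → A → X → ℝ) (μE : X → ℝ)
    (f : X → A → EuclideanSpace ℝ (Fin d)) (Fv : EuclideanSpace ℝ (Fin d))
    (ν : X → A → ℝ) : Prop :=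
  (∀ x a, 0 ≤ ν x a) ∧ (∑ x, ∑ a, ν x a = 1) ∧
  (∀ x, ∑ a, ν x a = μE x) ∧
  (∀ x, μE x = ∑ y, ∑ a, p y a x * ν y a) ∧
  (1 / (1 - β)) • (∑ x, ∑ a, ν x a • f x a) = Fv

/-! Once `μ_E` is invariant under `π`, the chain started from `μ_E` stays at `μ_E`, so every
summand of the discounted series is `π(a|x) μ_E(x)` and the normalization `1 - β` cancels the
geometric factor: `ν_π(x,a) = π(a|x) μ_E(x)`. Conversely the flow condition on `ν` says exactly
that `μ_E` is invariant under `π_ν`, because `π_ν(a|x) μ_E(x) = ν(x,a)` when `μ_E(x) > 0`.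
Both round trips are then the identities `π μ_E / μ_E = π` and `(ν / μ_E) μ_E = ν`. -/

section Stationary

variable {X A : Type*} [Fintype X] [Fintype A]

def IsStationaryLaw (p : X → A → X → ℝ) (π : X → A → ℝ) (μ : X → ℝ) : Prop :=
  ∀ x, μ x = ∑ y, ∑ a, p y a x * π y a * μ y

variable {p : X → A → X → ℝ} {π : X → A → ℝ} {μ : X → ℝ}

theorem IsStationaryLaw.stateLaw_eq (h : IsStationaryLaw p π μ) (t : ℕ) :
    stateLaw p π μ t = μ := by
  induction t with
  | zero => rfl
  | succ t ih =>
    funext x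
    simp only [stateLaw, ih]
    exact (h x).symm

theorem IsStationaryLaw.jointLaw_eq (h : IsStationaryLaw p π μ) (t : ℕ) (x : X) (a : A) :
    jointLaw p π μ t x a = π x a * μ x := by
  rw [jointLaw, h.stateLaw_eq]

theorem IsStationaryLaw.occ_eq {β : ℝ} (hβ0 : 0 ≤ β) (hβ1 : β < 1) (h : IsStationaryLaw p π μ)
    (x : X) (a : A) : occ β p π μ x a = π x a * μ x := by
  simp only [occ, h.jointLaw_eq, tsum_mul_right, tsum_geometric_of_lt_one hβ0 hβ1]
  rw [← mul_assoc, mul_inv_cancel₀ (sub_ne_zero.mpr hβ1.ne'), one_mul]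

theorem tsum_geometric_smul {E : Type*} [NormedAddCommGroup E] [NormedSpace ℝ E]
    {β : ℝ} (hβ0 : 0 ≤ β) (hβ1 : β < 1) (v : E) :
    ∑' t : ℕ, β ^ t • v = (1 / (1 - β)) • v := by
  rw [(summable_geometric_of_lt_one hβ0 hβ1).tsum_smul_const,
    tsum_geometric_of_lt_one hβ0 hβ1, one_div]

theorem IsStationaryLaw.tsum_discounted_features {E : Type*} [NormedAddCommGroup E]
    [NormedSpace ℝ E] {β : ℝ} (hβ0 : 0 ≤ β) (hβ1 : β < 1) (h : IsStationaryLaw p π μ)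
    (f : X → A → E) :
    ∑' t : ℕ, β ^ t • ∑ x, ∑ a, jointLaw p π μ t x a • f x a =
      (1 / (1 - β)) • ∑ x, ∑ a, (π x a * μ x) • f x a := by
  simp only [h.jointLaw_eq]
  exact tsum_geometric_smul hβ0 hβ1 _

end Stationary

section Feasible

variable {X A : Type*} [Fintype X] [Fintype A] {d : ℕ} {β : ℝ} {p : X → A → X → ℝ}
  {μE : X → ℝ} {f : X → A → EuclideanSpace ℝ (Fin d)} {Fv : EuclideanSpace ℝ (Fin d)}

theorem FeasiblePolicy.feasibleOcc_mul {π : X → A → ℝ} (hβ0 : 0 ≤ β) (hβ1 : β < 1)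
    (hμ0 : ∀ x, 0 ≤ μE x) (hμ1 : ∑ x, μE x = 1) (hπ : FeasiblePolicy β p μE f Fv π) :
    FeasibleOcc β p μE f Fv (fun x a => π x a * μE x) := by
  obtain ⟨hπ0, hπ1, hstat, hfeat⟩ := hπ
  have hmarg (x : X) : ∑ a, π x a * μE x = μE x := by rw [← Finset.sum_mul, hπ1 x, one_mul]
  refine ⟨fun x a => mul_nonneg (hπ0 x a) (hμ0 x), by simp only [hmarg, hμ1], hmarg,
    fun x => ?_, ?_⟩
  · simpa only [mul_assoc] using hstat x
  · rw [← IsStationaryLaw.tsum_discounted_features hβ0 hβ1 hstat, hfeat]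

theorem FeasibleOcc.div_sum_mul {ν : X → A → ℝ} (hν : FeasibleOcc β p μE f Fv ν)
    (hμ : ∀ x, μE x ≠ 0) (x : X) (a : A) : ν x a / (∑ b, ν x b) * μE x = ν x a := by
  rw [hν.2.2.1 x, div_mul_cancel₀ _ (hμ x)]

theorem FeasibleOcc.isStationaryLaw_div {ν : X → A → ℝ} (hν : FeasibleOcc β p μE f Fv ν)
    (hμ : ∀ x, μE x ≠ 0) : IsStationaryLaw p (fun x a => ν x a / ∑ b, ν x b) μE := by
  intro x
  simpa only [mul_assoc, hν.div_sum_mul hμ] using hν.2.2.2.1 x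

theorem FeasibleOcc.feasiblePolicy_div {ν : X → A → ℝ} (hβ0 : 0 ≤ β) (hβ1 : β < 1)
    (hμ : ∀ x, μE x ≠ 0) (hν : FeasibleOcc β p μE f Fv ν) :
    FeasiblePolicy β p μE f Fv (fun x a => ν x a / ∑ b, ν x b) := by
  have hstat := hν.isStationaryLaw_div hμ
  have hprod := hν.div_sum_mul hμ
  obtain ⟨hν0, -, hmarg, -, hfeat⟩ := hν
  refine ⟨fun x a => div_nonneg (hν0 x a) (Finset.sum_nonneg fun b _ => hν0 x b),
    fun x => ?_, hstat, ?_⟩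
  · rw [← Finset.sum_div, hmarg x, div_self (hμ x)]
  · rw [hstat.tsum_discounted_features hβ0 hβ1]
    simp only [hprod, hfeat]

end Feasible

theorem feasible_policy_occ_bijection_general
    {X A : Type*} [Fintype X] [Fintype A] {d : ℕ}
    (β : ℝ) (hβ0 : 0 < β) (hβ1 : β < 1)
    (p : X → A → X → ℝ)
    (μE : X → ℝ) (hμ0 : ∀ x, 0 < μE x) (hμ1 : ∑ x, μE x = 1)
    (f : X → A → EuclideanSpace ℝ (Fin d)) (Fv : EuclideanSpace ℝ (Fin d)) :
    (∀ π : X → A → ℝ, FeasiblePolicy β p μE f Fv π →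
      FeasibleOcc β p μE f Fv (fun x a => occ β p π μE x a)) ∧
    (∀ ν : X → A → ℝ, FeasibleOcc β p μE f Fv ν →
      FeasiblePolicy β p μE f Fv (fun x a => ν x a / ∑ b, ν x b)) ∧
    (∀ π : X → A → ℝ, FeasiblePolicy β p μE f Fv π →
      ∀ x a, occ β p π μE x a / (∑ b, occ β p π μE x b) = π x a) ∧
    (∀ ν : X → A → ℝ, FeasibleOcc β p μE f Fv ν →
      ∀ x a, occ β p (fun y b => ν y b / ∑ b', ν y b') μE x a = ν x a) := by
  have hμ (x : X) : μE x ≠ 0 := (hμ0 x).ne'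
  refine ⟨fun π hπ => ?_, fun ν hν => hν.feasiblePolicy_div hβ0.le hβ1 hμ,
    fun π hπ x a => ?_, fun ν hν x a => ?_⟩
  · simpa only [IsStationaryLaw.occ_eq hβ0.le hβ1 hπ.2.2.1] using
      hπ.feasibleOcc_mul hβ0.le hβ1 (fun x => (hμ0 x).le) hμ1
  · simp only [IsStationaryLaw.occ_eq hβ0.le hβ1 hπ.2.2.1, ← Finset.sum_mul, hπ.2.1 x, one_mul]
    exact mul_div_cancel_right₀ _ (hμ x)
  · rw [(hν.isStationaryLaw_div hμ).occ_eq hβ0.le hβ1, hν.div_sum_mul hμ]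

/-- provided `μ_E(x) > 0` for all `x`, the maps `π ↦ ν_π` and
`ν ↦ π_ν(a|x) = ν(x,a)/ν^X(x)` define a bijective correspondence between the feasible
policies of the maximum causal entropy problem and the feasible occupation measures of
its convex reformulation. -/
theorem feasible_policy_occ_bijection
    {X A : Type*} [Fintype X] [Fintype A] {d : ℕ}
    (β : ℝ) (hβ0 : 0 < β) (hβ1 : β < 1)
    (p : X → A → X → ℝ) (hp0 : ∀ y a x, 0 ≤ p y a x) (hp1 : ∀ y a, ∑ x, p y a x = 1)
    (μE : X → ℝ) (hμ0 : ∀ x, 0 < μE x) (hμ1 : ∑ x, μE x = 1)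
    (f : X → A → EuclideanSpace ℝ (Fin d)) (Fv : EuclideanSpace ℝ (Fin d)) :
    (∀ π : X → A → ℝ, FeasiblePolicy β p μE f Fv π →
      FeasibleOcc β p μE f Fv (fun x a => occ β p π μE x a)) ∧
    (∀ ν : X → A → ℝ, FeasibleOcc β p μE f Fv ν →
      FeasiblePolicy β p μE f Fv (fun x a => ν x a / ∑ b, ν x b)) ∧
    (∀ π : X → A → ℝ, FeasiblePolicy β p μE f Fv π →
      ∀ x a, occ β p π μE x a / (∑ b, occ β p π μE x b) = π x a) ∧
    (∀ ν : X → A → ℝ, FeasibleOcc β p μE f Fv ν →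
      ∀ x a, occ β p (fun y b => ν y b / ∑ b', ν y b') μE x a = ν x a) :=
  feasible_policy_occ_bijection_general β hβ0 hβ1 p μE hμ0 hμ1 f Fv
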